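/- Let (Ω, F, P) be a probability space with a filtration (F_L)_{L∈ℕ}, let ε > 0, and let Z_1, ..., Z_n be random variables measurable with respect to F_∞ = ∨_L F_L, with ε ≤ Z_i ≤ 1 almost surely for each i. Let B_1, ..., B_n > 0 be constants. For m ∈ ℕ set L(m) = ⌊√m⌋ and w_i^{(m)} = E[Z_i | F_{L(m)}]; define m_i(m) = max{ L(m), ⌊ m·√(B_i w_i^{(m)}) / ∑_{k=1}^n √(B_k w_k^{(m)}) ⌋ } for i = 1, ..., n−1, and m_n(m) = m − ∑_{i=1}^{n−1} m_i(m). Then lim_{m→∞} m · E[ ∑_{i=1}^n B_i w_i^{(m)} / m_i(m) ] = E[ (∑_{i=1}^n √(B_i Z_i))² ]. -/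

import Mathlib

open MeasureTheory ProbabilityTheory Filter Finset Topology

/-!
With `r_i = √(B_i w_i) / ∑_k √(B_k w_k)` the target proportions, the hybrid allocation is within
`(n + 1)(√m + 1)` of `m r_i` in every coordinate (the last coordinate absorbs the rounding errors
of the others), so `m_i(m) / m - r_i → 0` uniformly in `ω`. By Lévy's upward theorem
`w^{(m)} → Z` a.s., hence `m ∑ B_i w_i / m_i → ∑ B_i Z_i / r_i(Z) = (∑ √(B_i Z_i))²` a.s.
Since `ε ≤ w_i ≤ 1` bounds `r_i` below by a deterministic `c_i > 0`, the integrands are eventually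
bounded by `∑ 2 B_i / c_i`, and dominated convergence concludes.
-/

lemma tendsto_nat_sqrt_atTop : Tendsto Nat.sqrt atTop atTop :=
  tendsto_atTop_atTop.mpr fun b => ⟨b * b, fun _ h => Nat.le_sqrt.mpr h⟩

lemma tendsto_sqrt_add_one_div_atTop :
    Tendsto (fun m : ℕ => (√(m : ℝ) + 1) / m) atTop (𝓝 0) := by
  have h : Tendsto (fun m : ℕ => (√(m : ℝ))⁻¹ + (m : ℝ)⁻¹) atTop (𝓝 (0 + 0)) :=
    (tendsto_inv_atTop_zero.comp (Real.tendsto_sqrt_atTop.comp tendsto_natCast_atTop_atTop)).add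
      (tendsto_inv_atTop_zero.comp tendsto_natCast_atTop_atTop)
  rw [add_zero] at h
  refine h.congr fun m => ?_
  rw [add_div, Real.sqrt_div_self', one_div, one_div]

lemma sum_filter_val_lt_add_last {M : Type*} [AddCommMonoid M] {n : ℕ} (f : Fin (n + 1) → M) :
    ∑ i ∈ univ.filter (fun i : Fin (n + 1) => (i : ℕ) < n), f i + f (Fin.last n) = ∑ i, f i := by
  rw [sum_filter, Fin.sum_univ_castSucc, Fin.sum_univ_castSucc]
  simp

lemma condExp_mem_Icc {α : Type*} {m m0 : MeasurableSpace α} {μ : Measure α} [IsFiniteMeasure μ]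
    (hm : m ≤ m0) {f : α → ℝ} (hf : Integrable f μ) {a b : ℝ} (h : ∀ᵐ x ∂μ, f x ∈ Set.Icc a b) :
    ∀ᵐ x ∂μ, μ[f|m] x ∈ Set.Icc a b := by
  have hlo := condExp_mono (m := m) (integrable_const a) hf (h.mono fun x hx => hx.1)
  have hhi := condExp_mono (m := m) hf (integrable_const b) (h.mono fun x hx => hx.2)
  rw [condExp_const hm] at hlo hhi
  filter_upwards [hlo, hhi] with x hxlo hxhi using ⟨hxlo, hxhi⟩

noncomputable def sqrtShare {ι : Type*} [Fintype ι] (B w : ι → ℝ) (i : ι) : ℝ :=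
  √(B i * w i) / ∑ k, √(B k * w k)

section sqrtShare

variable {ι : Type*} [Fintype ι] {B w : ι → ℝ}

lemma sqrtShare_nonneg (i : ι) : 0 ≤ sqrtShare B w i :=
  div_nonneg (Real.sqrt_nonneg _) (sum_nonneg fun _ _ => Real.sqrt_nonneg _)

lemma sum_sqrtShare (h : ∑ k, √(B k * w k) ≠ 0) : ∑ i, sqrtShare B w i = 1 := by
  unfold sqrtShare
  rw [← sum_div, div_self h]

lemma sqrtShare_pos [Nonempty ι] (hB : ∀ i, 0 < B i) (hw : ∀ i, 0 < w i) (i : ι) :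
    0 < sqrtShare B w i :=
  div_pos (Real.sqrt_pos.mpr (mul_pos (hB i) (hw i)))
    (sum_pos (fun k _ => Real.sqrt_pos.mpr (mul_pos (hB k) (hw k))) univ_nonempty)

lemma sqrt_div_sum_sqrt_le_sqrtShare [Nonempty ι] {ε : ℝ} (hε : 0 < ε) (hB : ∀ i, 0 < B i)
    (hw : ∀ i, w i ∈ Set.Icc ε 1) (i : ι) :
    √(B i * ε) / ∑ k, √(B k) ≤ sqrtShare B w i :=
  div_le_div₀ (Real.sqrt_nonneg _)
    (Real.sqrt_le_sqrt (mul_le_mul_of_nonneg_left (hw i).1 (hB i).le))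
    (sum_pos (fun k _ => Real.sqrt_pos.mpr (mul_pos (hB k) (hε.trans_le (hw k).1))) univ_nonempty)
    (sum_le_sum fun k _ => Real.sqrt_le_sqrt (mul_le_of_le_one_right (hB k).le (hw k).2))

lemma sum_div_sqrtShare :
    ∑ i, B i * w i / sqrtShare B w i = (∑ i, √(B i * w i)) ^ 2 := by
  have hterm : ∀ i, B i * w i / sqrtShare B w i = √(B i * w i) * ∑ k, √(B k * w k) := by
    intro i
    rw [sqrtShare, div_div_eq_mul_div, mul_comm, mul_div_assoc, Real.div_sqrt, mul_comm]
  rw [sum_congr rfl fun i _ => hterm i, ← sum_mul, sq]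

end sqrtShare

def IsHybridAlloc {n : ℕ} (m : ℕ) (r : Fin (n + 1) → ℝ) (a : Fin (n + 1) → ℤ) : Prop :=
  (∀ i : Fin (n + 1), (i : ℕ) < n → a i = max (Nat.sqrt m : ℤ) ⌊(m : ℝ) * r i⌋) ∧
    a (Fin.last n) = m - ∑ i ∈ univ.filter (fun i : Fin (n + 1) => (i : ℕ) < n), a i

namespace IsHybridAlloc

variable {n : ℕ}

section

variable {m : ℕ} {r : Fin (n + 1) → ℝ} {a : Fin (n + 1) → ℤ}

lemma abs_sub_le_of_lt (ha : IsHybridAlloc m r a) (hr : ∀ i, 0 ≤ r i) {i : Fin (n + 1)}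
    (hi : (i : ℕ) < n) : |(a i : ℝ) - m * r i| ≤ √m + 1 := by
  have hai : (a i : ℝ) = max (Nat.sqrt m : ℝ) ⌊(m : ℝ) * r i⌋ := by
    rw [ha.1 i hi]; push_cast; rfl
  have hupper : max (Nat.sqrt m : ℝ) ⌊(m : ℝ) * r i⌋ ≤ √m + m * r i :=
    (max_le_max Real.nat_sqrt_le_real_sqrt (Int.floor_le _)).trans
      (max_le (le_add_of_nonneg_right (mul_nonneg m.cast_nonneg (hr i)))
        (le_add_of_nonneg_left (Real.sqrt_nonneg _)))
  have hlower : (m : ℝ) * r i - 1 < max (Nat.sqrt m : ℝ) ⌊(m : ℝ) * r i⌋ :=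
    (Int.sub_one_lt_floor _).trans_le (le_max_right _ _)
  rw [abs_sub_le_iff, hai]
  constructor <;> linarith [Real.sqrt_nonneg (m : ℝ)]

lemma abs_sub_le (ha : IsHybridAlloc m r a) (hr : ∀ i, 0 ≤ r i) (hr1 : ∑ i, r i = 1)
    (i : Fin (n + 1)) : |(a i : ℝ) - m * r i| ≤ (n + 1) * (√m + 1) := by
  have hlt : ∀ j ∈ univ.filter (fun j : Fin (n + 1) => (j : ℕ) < n),
      |(a j : ℝ) - m * r j| ≤ √m + 1 := fun j hj => ha.abs_sub_le_of_lt hr (mem_filter.mp hj).2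
  have hsqrt : 0 ≤ √(m : ℝ) + 1 := by positivity
  by_cases hi : (i : ℕ) < n
  · exact (hlt i (by simpa using hi)).trans (le_mul_of_one_le_left hsqrt (by linarith))
  obtain rfl : i = Fin.last n := Fin.ext (by simp only [Fin.val_last]; omega)
  have hlast : (a (Fin.last n) : ℝ) - m * r (Fin.last n) =
      -∑ j ∈ univ.filter (fun j : Fin (n + 1) => (j : ℕ) < n), ((a j : ℝ) - m * r j) := by
    have hr' := sum_filter_val_lt_add_last r
    rw [ha.2, sum_sub_distrib, ← mul_sum]
    push_cast
    rw [hr1] at hr'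
    linear_combination -(m : ℝ) * hr'
  calc |(a (Fin.last n) : ℝ) - m * r (Fin.last n)|
      ≤ ∑ j ∈ univ.filter (fun j : Fin (n + 1) => (j : ℕ) < n), |(a j : ℝ) - m * r j| := by
        rw [hlast, abs_neg]; exact abs_sum_le_sum_abs _ _
    _ ≤ (univ.filter (fun j : Fin (n + 1) => (j : ℕ) < n)).card * (√m + 1) := by
        rw [← nsmul_eq_mul]; exact sum_le_card_nsmul _ _ _ hlt
    _ ≤ (n + 1) * (√m + 1) := by
        gcongr
        exact_mod_cast (card_filter_le _ _).trans (card_univ.trans (Fintype.card_fin _)).le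

end

lemma tendsto_div {r : ℕ → Fin (n + 1) → ℝ} {ρ : Fin (n + 1) → ℝ} {a : ℕ → Fin (n + 1) → ℤ}
    (ha : ∀ m, IsHybridAlloc m (r m) (a m))
    (hr : ∀ᶠ m in atTop, (∀ i, 0 ≤ r m i) ∧ ∑ i, r m i = 1)
    (hρ : ∀ i, Tendsto (fun m => r m i) atTop (𝓝 (ρ i))) (i : Fin (n + 1)) :
    Tendsto (fun m : ℕ => (a m i : ℝ) / m) atTop (𝓝 (ρ i)) := by
  have herr : Tendsto (fun m : ℕ => (a m i : ℝ) / m - r m i) atTop (𝓝 0) := by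
    refine squeeze_zero_norm' ?_
      (by simpa using tendsto_sqrt_add_one_div_atTop.const_mul (n + 1 : ℝ))
    filter_upwards [hr, eventually_gt_atTop 0] with m ⟨hr0, hr1⟩ hm
    have hm' : (0 : ℝ) < m := by exact_mod_cast hm
    rw [Real.norm_eq_abs, ← mul_div_assoc, div_sub' hm'.ne', abs_div, abs_of_pos hm']
    exact div_le_div_of_nonneg_right ((ha m).abs_sub_le hr0 hr1 i) hm'.le
  simpa using herr.add (hρ i)

lemma eventually_half_mul_le {c : Fin (n + 1) → ℝ} (hc : ∀ i, 0 < c i) :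
    ∀ᶠ m : ℕ in atTop, ∀ (r : Fin (n + 1) → ℝ) (a : Fin (n + 1) → ℤ), IsHybridAlloc m r a →
      (∀ i, c i ≤ r i) → ∑ i, r i = 1 → ∀ i, c i / 2 * m ≤ a i := by
  have hδ : Tendsto (fun m : ℕ => (n + 1) * ((√(m : ℝ) + 1) / m)) atTop (𝓝 0) := by
    simpa using tendsto_sqrt_add_one_div_atTop.const_mul (n + 1 : ℝ)
  have hsmall : ∀ᶠ m : ℕ in atTop, ∀ i, (n + 1) * ((√(m : ℝ) + 1) / m) ≤ c i / 2 :=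
    eventually_all.mpr fun i => hδ.eventually (ge_mem_nhds (half_pos (hc i)))
  filter_upwards [hsmall, eventually_gt_atTop 0] with m hδm hm0 r a ha hcr hr1 i
  have hm' : (0 : ℝ) < m := by exact_mod_cast hm0
  have herr := (abs_sub_le_iff.mp (ha.abs_sub_le (fun j => (hc j).le.trans (hcr j)) hr1 i)).2
  have hsmall_i : (n + 1) * (√(m : ℝ) + 1) ≤ c i / 2 * m := by
    rw [← div_le_iff₀ hm', mul_div_assoc]; exact hδm i
  nlinarith [mul_le_mul_of_nonneg_left (hcr i) hm'.le]

lemma measurable {Ω : Type*} {mΩ : MeasurableSpace Ω} {m : ℕ} {r : Ω → Fin (n + 1) → ℝ}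
    {a : Ω → Fin (n + 1) → ℤ} (ha : ∀ ω, IsHybridAlloc m (r ω) (a ω))
    (hr : ∀ i, Measurable fun ω => r ω i) (i : Fin (n + 1)) : Measurable fun ω => a ω i := by
  have hlt : ∀ j : Fin (n + 1), (j : ℕ) < n → Measurable fun ω => a ω j := fun j hj => by
    simp_rw [fun ω => (ha ω).1 j hj]
    exact (measurable_of_countable _).comp (measurable_const.mul (hr j)).floor
  by_cases hi : (i : ℕ) < n
  · exact hlt i hi
  obtain rfl : i = Fin.last n := Fin.ext (by simp only [Fin.val_last]; omega)
  simp_rw [fun ω => (ha ω).2]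
  exact measurable_const.sub (Finset.measurable_sum _ fun j hj => hlt j (mem_filter.mp hj).2)

end IsHybridAlloc

lemma tendsto_mul_sum_div_of_isHybridAlloc {n : ℕ} {B : Fin (n + 1) → ℝ} (hB : ∀ i, 0 < B i)
    {w : ℕ → Fin (n + 1) → ℝ} {z : Fin (n + 1) → ℝ} (hz : ∀ i, 0 < z i)
    (hw : ∀ i, Tendsto (fun m => w m i) atTop (𝓝 (z i))) {a : ℕ → Fin (n + 1) → ℤ}
    (ha : ∀ m, IsHybridAlloc m (sqrtShare B (w m)) (a m)) :
    Tendsto (fun m : ℕ => m * ∑ i, B i * w m i / a m i) atTop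
      (𝓝 ((∑ i, √(B i * z i)) ^ 2)) := by
  have hS : Tendsto (fun m => ∑ k, √(B k * w m k)) atTop (𝓝 (∑ k, √(B k * z k))) :=
    tendsto_finsetSum _ fun k _ => ((hw k).const_mul (B k)).sqrt
  have hSpos : 0 < ∑ k, √(B k * z k) :=
    sum_pos (fun k _ => Real.sqrt_pos.mpr (mul_pos (hB k) (hz k))) univ_nonempty
  have hshare : ∀ i, Tendsto (fun m => sqrtShare B (w m) i) atTop (𝓝 (sqrtShare B z i)) :=
    fun i => (((hw i).const_mul (B i)).sqrt).div hS hSpos.ne'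
  have hsum : ∀ᶠ m in atTop, (∀ i, 0 ≤ sqrtShare B (w m) i) ∧ ∑ i, sqrtShare B (w m) i = 1 :=
    (hS.eventually (lt_mem_nhds hSpos)).mono fun m hm =>
      ⟨sqrtShare_nonneg, sum_sqrtShare hm.ne'⟩
  have hterm : ∀ i, Tendsto (fun m : ℕ => B i * w m i / (a m i / m)) atTop
      (𝓝 (B i * z i / sqrtShare B z i)) := fun i =>
    ((hw i).const_mul (B i)).div (IsHybridAlloc.tendsto_div ha hsum hshare i)
      (sqrtShare_pos hB hz i).ne'
  rw [← sum_div_sqrtShare]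
  refine (tendsto_finsetSum _ fun i _ => hterm i).congr fun m => ?_
  rw [mul_sum]
  refine sum_congr rfl fun i _ => ?_
  rw [div_div_eq_mul_div]
  ring

theorem tendsto_mul_integral_sum_div_of_isHybridAlloc {Ω : Type*} {mΩ : MeasurableSpace Ω}
    {P : Measure Ω} [IsFiniteMeasure P] {n : ℕ} {ε : ℝ} (hε : 0 < ε) {B : Fin (n + 1) → ℝ}
    (hB : ∀ i, 0 < B i) {w : ℕ → Fin (n + 1) → Ω → ℝ} {z : Fin (n + 1) → Ω → ℝ}
    {a : ℕ → Fin (n + 1) → Ω → ℤ} (hw_meas : ∀ m i, Measurable (w m i))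
    (hw_mem : ∀ᵐ ω ∂P, ∀ m i, w m i ω ∈ Set.Icc ε 1)
    (hwz : ∀ᵐ ω ∂P, ∀ i, Tendsto (fun m => w m i ω) atTop (𝓝 (z i ω)))
    (ha : ∀ m ω, IsHybridAlloc m (sqrtShare B fun i => w m i ω) fun i => a m i ω) :
    Tendsto (fun m : ℕ => (m : ℝ) * ∫ ω, ∑ i, B i * w m i ω / a m i ω ∂P) atTop
      (𝓝 (∫ ω, (∑ i, √(B i * z i ω)) ^ 2 ∂P)) := by
  set c : Fin (n + 1) → ℝ := fun i => √(B i * ε) / ∑ k, √(B k)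
  have hc : ∀ i, 0 < c i := fun i => div_pos (Real.sqrt_pos.mpr (mul_pos (hB i) hε))
    (sum_pos (fun k _ => Real.sqrt_pos.mpr (hB k)) univ_nonempty)
  have hmeas : ∀ m : ℕ,
      AEStronglyMeasurable (fun ω => (m : ℝ) * ∑ i, B i * w m i ω / a m i ω) P := by
    intro m
    have ha_meas := IsHybridAlloc.measurable (ha m) fun i => by
      unfold sqrtShare
      exact ((measurable_const.mul (hw_meas m i)).sqrt).div
        (Finset.measurable_sum _ fun k _ => (measurable_const.mul (hw_meas m k)).sqrt)
    refine (measurable_const.mul (Finset.measurable_sum _ fun i _ => ?_)).aestronglyMeasurable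
    exact (measurable_const.mul (hw_meas m i)).div (measurable_from_top.comp (ha_meas i))
  have hbound : ∀ᶠ m : ℕ in atTop, ∀ᵐ ω ∂P,
      ‖(m : ℝ) * ∑ i, B i * w m i ω / a m i ω‖ ≤ ∑ i, 2 * B i / c i := by
    filter_upwards [IsHybridAlloc.eventually_half_mul_le hc, eventually_gt_atTop 0] with m hm hm0
    filter_upwards [hw_mem] with ω hω
    have hm' : (0 : ℝ) < m := by exact_mod_cast hm0
    have hlow := hm _ _ (ha m ω) (sqrt_div_sum_sqrt_le_sqrtShare hε hB (hω m))
      (sum_sqrtShare (sum_pos (fun k _ => Real.sqrt_pos.mpr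
        (mul_pos (hB k) (hε.trans_le (hω m k).1))) univ_nonempty).ne')
    have hterm : ∀ i, 0 ≤ (m : ℝ) * (B i * w m i ω / a m i ω) ∧
        (m : ℝ) * (B i * w m i ω / a m i ω) ≤ 2 * B i / c i := by
      intro i
      have hapos : 0 < (a m i ω : ℝ) := (by have := hc i; positivity : 0 < c i / 2 * m).trans_le
        (hlow i)
      have hBw : 0 ≤ B i * w m i ω := mul_nonneg (hB i).le (hε.le.trans (hω m i).1)
      refine ⟨by positivity, ?_⟩
      calc (m : ℝ) * (B i * w m i ω / a m i ω) ≤ m * (B i / (c i / 2 * m)) :=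
            mul_le_mul_of_nonneg_left (div_le_div₀ (hB i).le
              (mul_le_of_le_one_right (hB i).le (hω m i).2) (by have := hc i; positivity)
              (hlow i)) hm'.le
        _ = 2 * B i / c i := by field_simp
    rw [Real.norm_eq_abs, abs_of_nonneg (by rw [mul_sum]; exact sum_nonneg fun i _ => (hterm i).1),
      mul_sum]
    exact sum_le_sum fun i _ => (hterm i).2
  have hlim : ∀ᵐ ω ∂P, Tendsto (fun m : ℕ => (m : ℝ) * ∑ i, B i * w m i ω / a m i ω) atTop
      (𝓝 ((∑ i, √(B i * z i ω)) ^ 2)) := by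
    filter_upwards [hw_mem, hwz] with ω hω hωz
    exact tendsto_mul_sum_div_of_isHybridAlloc hB
      (fun i => hε.trans_le (ge_of_tendsto' (hωz i) fun m => (hω m i).1)) hωz (fun m => ha m ω)
  simp_rw [← integral_const_mul]
  exact tendsto_integral_filter_of_dominated_convergence _ (.of_forall hmeas) hbound
    (integrable_const _) hlim

/-- First-order optimality of the hybrid two-stage design for the parallel-series system:
`m · E[∑ B i · w i (m) / m i (m)] → E[(∑ √(B i · Z i))²]`. -/
theorem hybrid_first_order_optimality {Ω : Type*} {mΩ : MeasurableSpace Ω} (P : Measure Ω)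
    [IsProbabilityMeasure P] (F : ℕ → MeasurableSpace Ω)
    (hFmono : Monotone F) (hFle : ∀ L, F L ≤ mΩ)
    (ε : ℝ) (hε : 0 < ε)
    (n : ℕ) (Z : Fin (n + 1) → Ω → ℝ)
    (hZmeas : ∀ i, Measurable[⨆ L, F L] (Z i))
    (hZ : ∀ i, ∀ᵐ ω ∂P, Z i ω ∈ Set.Icc ε 1)
    (B : Fin (n + 1) → ℝ) (hB : ∀ i, 0 < B i)
    (alloc : ℕ → Fin (n + 1) → Ω → ℤ)
    (hAlloc : ∀ m (ω : Ω) (i : Fin (n + 1)), (i : ℕ) < n →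
      alloc m i ω = max (Nat.sqrt m : ℤ)
        ⌊(m : ℝ) * Real.sqrt (B i * (P[Z i | F (Nat.sqrt m)]) ω) /
          ∑ k, Real.sqrt (B k * (P[Z k | F (Nat.sqrt m)]) ω)⌋)
    (hAllocLast : ∀ m (ω : Ω),
      alloc m (Fin.last n) ω =
        (m : ℤ) - ∑ i ∈ Finset.univ.filter (fun i : Fin (n + 1) => (i : ℕ) < n),
          alloc m i ω) :
    Tendsto (fun m : ℕ =>
        (m : ℝ) * ∫ ω, ∑ i, B i * (P[Z i | F (Nat.sqrt m)]) ω / (alloc m i ω : ℝ) ∂P)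
      atTop (nhds (∫ ω, (∑ i, Real.sqrt (B i * Z i ω)) ^ 2 ∂P)) := by
  let ℱ : Filtration ℕ mΩ := ⟨F, hFmono, hFle⟩
  have hZint : ∀ i, Integrable (Z i) P := fun i =>
    .of_bound ((hZmeas i).mono (iSup_le hFle) le_rfl).aestronglyMeasurable 1 <|
      (hZ i).mono fun ω hω => abs_le.mpr ⟨by linarith [hω.1], hω.2⟩
  have hw_mem : ∀ᵐ ω ∂P, ∀ m i, (P[Z i | F (Nat.sqrt m)]) ω ∈ Set.Icc ε 1 :=
    ae_all_iff.mpr fun m => ae_all_iff.mpr fun i => condExp_mem_Icc (hFle _) (hZint i) (hZ i)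
  have hlevy : ∀ᵐ ω ∂P, ∀ i, Tendsto (fun L => (P[Z i | F L]) ω) atTop (𝓝 (Z i ω)) :=
    ae_all_iff.mpr fun i => (hZint i).tendsto_ae_condExp (ℱ := ℱ) (hZmeas i).stronglyMeasurable
  refine tendsto_mul_integral_sum_div_of_isHybridAlloc hε hB
    (fun m i => (stronglyMeasurable_condExp.mono (hFle _)).measurable) hw_mem
    (hlevy.mono fun ω h i => (h i).comp tendsto_nat_sqrt_atTop)
    fun m ω => ⟨fun i hi => ?_, hAllocLast m ω⟩
  exact (hAlloc m ω i hi).trans (by rw [mul_div_assoc]; rfl)
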